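/- arXiv:1812.11649 — 5 statements merged into one kernel-verified Lean document; each statement's English description precedes it below -/
import Mathlib

section
/- For every integer k ≥ 1, the greatest common divisor of the binomial coefficients C(4k+5, 4j+2) for 0 ≤ j ≤ k divides (4k+5)·2^(4k+1). -/
/-!
The gcd divides the integer combination `∑ j, (2j+1) C(4k+5, 4j+2)`. Since
`(4j+2) C(4k+5, 4j+2) = (4k+5) C(4k+4, 4j+1)`, twice this combination is `4k+5` times the sum of
the `C(4k+4, i)` with `i ≡ 1 mod 4`. The reflection `i ↦ 4k+4-i` swaps the residues `1` and `3`
mod `4`, so that sum is half of the odd-index sum `2^(4k+3)`, and the combination equals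
`(4k+5) 2^(4k+1)`.
-/

open Finset

theorem Finset.sum_range_two_mul {M : Type*} [AddCommMonoid M] (f : ℕ → M) (n : ℕ) :
    ∑ i ∈ range (2 * n), f i = ∑ j ∈ range n, (f (2 * j) + f (2 * j + 1)) := by
  induction n with
  | zero => simp
  | succ n ih =>
    rw [Nat.mul_succ, sum_range_succ, sum_range_succ, ih, sum_range_succ, add_assoc]

namespace Nat

theorem sum_range_choose_two_mul_add_one (n : ℕ) :
    ∑ i ∈ range (n + 1), (2 * n + 2).choose (2 * i + 1) = 2 ^ (2 * n + 1) := by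
  rw [← sum_range_choose, show 2 * n + 1 + 1 = 2 * (n + 1) by ring, sum_range_two_mul]
  exact sum_congr rfl fun i _ => choose_succ_succ' _ _

theorem sum_range_choose_four_mul_add_three (k : ℕ) :
    ∑ j ∈ range (k + 1), (4 * k + 4).choose (4 * j + 3) =
      ∑ j ∈ range (k + 1), (4 * k + 4).choose (4 * j + 1) := by
  rw [← sum_range_reflect]
  refine sum_congr rfl fun j hj => ?_
  have hj : j < k + 1 := mem_range.mp hj
  rw [← choose_symm (by omega)]
  congr 1
  omega

theorem sum_range_choose_four_mul_add_one (k : ℕ) :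
    ∑ j ∈ range (k + 1), (4 * k + 4).choose (4 * j + 1) = 2 ^ (4 * k + 2) := by
  have hodd := sum_range_choose_two_mul_add_one (2 * k + 1)
  rw [show 2 * (2 * k + 1) + 2 = 4 * k + 4 by ring, show 2 * k + 1 + 1 = 2 * (k + 1) by ring,
    show 2 * (2 * k + 1) + 1 = 4 * k + 2 + 1 by ring, pow_succ,
    sum_range_two_mul, sum_add_distrib] at hodd
  simp only [show ∀ j, 2 * (2 * j) + 1 = 4 * j + 1 by omega,
    show ∀ j, 2 * (2 * j + 1) + 1 = 4 * j + 3 by omega,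
    sum_range_choose_four_mul_add_three] at hodd
  omega

theorem sum_range_odd_mul_choose_four_mul_add_two (k : ℕ) :
    ∑ j ∈ range (k + 1), (2 * j + 1) * (4 * k + 5).choose (4 * j + 2) =
      (4 * k + 5) * 2 ^ (4 * k + 1) := by
  have hterm (j : ℕ) : 2 * ((2 * j + 1) * (4 * k + 5).choose (4 * j + 2)) =
      (4 * k + 5) * (4 * k + 4).choose (4 * j + 1) := by
    rw [add_one_mul_choose_eq]
    ring
  apply Nat.eq_of_mul_eq_mul_left two_pos
  rw [mul_sum, sum_congr rfl fun j _ => hterm j, ← mul_sum, sum_range_choose_four_mul_add_one]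
  ring

end Nat

theorem gcd_binomials_dvd_general (k : ℕ) :
    (Finset.range (k + 1)).gcd (fun j => Nat.choose (4 * k + 5) (4 * j + 2)) ∣
      (4 * k + 5) * 2 ^ (4 * k + 1) := by
  rw [← Nat.sum_range_odd_mul_choose_four_mul_add_two]
  exact dvd_sum fun j hj => (gcd_dvd hj).mul_left _

/-- For every integer `k ≥ 1`, the gcd of the binomial coefficients
`C(4k+5, 4j+2)` for `0 ≤ j ≤ k` divides `(4k+5) · 2^(4k+1)`. -/
theorem gcd_binomials_dvd (k : ℕ) (hk : 1 ≤ k) :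
    (Finset.range (k + 1)).gcd (fun j => Nat.choose (4 * k + 5) (4 * j + 2)) ∣
      (4 * k + 5) * 2 ^ (4 * k + 1) :=
  gcd_binomials_dvd_general k
end

section
/- Let p be an odd prime dividing k+1 (k ≥ 0 an integer). Then there exists j with 0 ≤ j ≤ k such that the binomial coefficient C(4k+5, 4j+2) is not divisible by p. -/
/-! Write `4k + 5 = pT + 1` with `T = 4(k + 1)/p`. By Lucas's theorem
`C(pT + 1, pS + e) ≡ C(T, S) (mod p)` for `e ∈ {0, 1}`, so it suffices to find `S` with
`p ∤ C(T, S)` and `pS ≡ 1` or `2 (mod 4)`; such an `S` is read off the two leading base-`p` digits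
of `T`. -/

open Nat

namespace Choose

variable {p : ℕ} [hp : Fact p.Prime]

theorem choose_pow_mul_add_modEq {a q r s u : ℕ} (hr : r < p ^ a) (hu : u < p ^ a) :
    choose (p ^ a * q + r) (p ^ a * s + u) ≡ choose q s * choose r u [MOD p] := by
  induction a generalizing r u with
  | zero =>
    obtain rfl : r = 0 := by simpa using hr
    obtain rfl : u = 0 := by simpa using hu
    simp [Nat.ModEq.refl]
  | succ a ih =>
    have hp0 := hp.out.pos
    have split (y x : ℕ) : (p ^ (a + 1) * y + x) % p = x % p ∧
        (p ^ (a + 1) * y + x) / p = p ^ a * y + x / p := by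
      rw [pow_succ', mul_assoc, Nat.mul_add_mod, Nat.mul_add_div hp0]
      exact ⟨rfl, rfl⟩
    have hlt {x : ℕ} (hx : x < p ^ (a + 1)) : x / p < p ^ a :=
      Nat.div_lt_of_lt_mul (by rwa [← pow_succ'])
    obtain ⟨hn₁, hn₂⟩ := split q r
    obtain ⟨hk₁, hk₂⟩ := split s u
    calc choose (p ^ (a + 1) * q + r) (p ^ (a + 1) * s + u)
        ≡ choose (r % p) (u % p) * choose (p ^ a * q + r / p) (p ^ a * s + u / p) [MOD p] := by
          rw [← hn₁, ← hn₂, ← hk₁, ← hk₂]; exact choose_modEq_choose_mod_mul_choose_div_nat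
      _ ≡ choose (r % p) (u % p) * (choose q s * choose (r / p) (u / p)) [MOD p] :=
          (ih (hlt hr) (hlt hu)).mul_left _
      _ = choose q s * (choose (r % p) (u % p) * choose (r / p) (u / p)) := by ring
      _ ≡ choose q s * choose r u [MOD p] :=
          (choose_modEq_choose_mod_mul_choose_div_nat (p := p)).symm.mul_left _

theorem not_dvd_choose_pow_mul_add {a q r s u : ℕ} (hr : r < p ^ a) (hu : u < p ^ a)
    (hqs : ¬ p ∣ choose q s) (hru : ¬ p ∣ choose r u) :
    ¬ p ∣ choose (p ^ a * q + r) (p ^ a * s + u) := by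
  rw [(choose_pow_mul_add_modEq hr hu).dvd_iff dvd_rfl]
  exact hp.out.not_dvd_mul hqs hru

end Choose

theorem Nat.Prime.not_dvd_choose_of_lt {p n k : ℕ} (hp : p.Prime) (hkn : k ≤ n) (hnp : n < p) :
    ¬ p ∣ choose n k := fun h => by
  have := hp.dvd_factorial.mp <|
    choose_mul_factorial_mul_factorial hkn ▸ (h.mul_right _).mul_right _
  omega

theorem Nat.exists_leading_digit {p T : ℕ} (hp : 1 < p) (hT : T ≠ 0) :
    ∃ A t T₀, T = p ^ A * t + T₀ ∧ 0 < t ∧ t < p ∧ T₀ < p ^ A := by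
  have hA : 0 < p ^ log p T := pow_pos (by omega) _
  refine ⟨log p T, T / p ^ log p T, T % p ^ log p T, (Nat.div_add_mod T _).symm,
    Nat.div_pos (pow_log_le_self p hT) hA, ?_, Nat.mod_lt _ hA⟩
  rw [Nat.div_lt_iff_lt_mul hA, ← pow_succ']
  exact lt_pow_succ_log_self hp T

/-- Writing `T = t p^A + t' p^B + (lower digits)` with leading digit `t`, the candidates are
`S = 2 p^A` if `t ≥ 2`, and otherwise one of `p^A`, `p^B`, `p^A + p^B`: the odd numbers
`p^(A+1)` and `p^(B+1)` are either `1` modulo `4` or both `3`, with sum `2`. -/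
theorem exists_not_dvd_choose_mul_mod_four {p T : ℕ} (hp : p.Prime) (hodd : Odd p) (hT : T ≠ 0)
    (hTeven : Even T) : ∃ S, ¬ p ∣ choose T S ∧ (p * S % 4 = 1 ∨ p * S % 4 = 2) := by
  have : Fact p.Prime := ⟨hp⟩
  have hpow_odd (n : ℕ) : p ^ n % 2 = 1 := Nat.odd_iff.mp hodd.pow
  have hT2 := Nat.even_iff.mp hTeven
  have hchoose_zero (n : ℕ) : ¬ p ∣ choose n 0 := by simp [hp.ne_one]
  obtain ⟨A, t, T₀, rfl, ht0, htp, hT₀⟩ := exists_leading_digit hp.one_lt hT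
  have hpA : 0 < p ^ A := pow_pos hp.pos A
  have leading {s u : ℕ} (hs : s ≤ t) (hu : u < p ^ A) (h : ¬ p ∣ choose T₀ u) :
      ¬ p ∣ choose (p ^ A * t + T₀) (p ^ A * s + u) :=
    Choose.not_dvd_choose_pow_mul_add hT₀ hu (hp.not_dvd_choose_of_lt hs htp) h
  by_cases ht : 2 ≤ t
  · refine ⟨p ^ A * 2 + 0, leading ht hpA (hchoose_zero _), Or.inr ?_⟩
    have := hpow_odd (A + 1)
    rw [show p * (p ^ A * 2 + 0) = p ^ (A + 1) * 2 by ring]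
    omega
  obtain rfl : t = 1 := by omega
  have hT₀ : T₀ ≠ 0 := by have := hpow_odd A; omega
  obtain ⟨B, t', T₁, rfl, ht'0, ht'p, hT₁⟩ := exists_leading_digit hp.one_lt hT₀
  have hpB : 0 < p ^ B := pow_pos hp.pos B
  have hBA : p ^ B < p ^ A := by nlinarith
  have hB : ¬ p ∣ choose (p ^ B * t' + T₁) (p ^ B) := by
    simpa using Choose.not_dvd_choose_pow_mul_add (s := 1) hT₁ hpB
      (hp.not_dvd_choose_of_lt ht'0 ht'p) (hchoose_zero _)
  have hA1 := hpow_odd (A + 1)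
  have hB1 := hpow_odd (B + 1)
  rw [pow_succ'] at hA1 hB1
  by_cases hA : p * p ^ A % 4 = 1
  · exact ⟨p ^ A * 1 + 0, leading le_rfl hpA (hchoose_zero _), Or.inl (by simpa using hA)⟩
  by_cases hB' : p * p ^ B % 4 = 1
  · exact ⟨p ^ A * 0 + p ^ B, leading (Nat.zero_le _) hBA hB, Or.inl (by simpa using hB')⟩
  refine ⟨p ^ A * 1 + p ^ B, leading le_rfl hBA hB, Or.inr ?_⟩
  rw [mul_one, mul_add]
  omega

/-- If `p` is an odd prime dividing `k+1`, then there is `0 ≤ j ≤ k` such that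
`p` does not divide the binomial coefficient `C(4k+5, 4j+2)`. -/
theorem exists_binomial_not_dvd (k p : ℕ) (hp : p.Prime) (hodd : Odd p)
    (hdvd : p ∣ (k + 1)) :
    ∃ j : ℕ, j ≤ k ∧ ¬ p ∣ Nat.choose (4 * k + 5) (4 * j + 2) := by
  have : Fact p.Prime := ⟨hp⟩
  have hp2 := hp.two_le
  obtain ⟨m, hm⟩ := hdvd
  have hm0 : m ≠ 0 := by rintro rfl; simp at hm
  obtain ⟨S, hS, hS4⟩ :=
    exists_not_dvd_choose_mul_mod_four hp hodd (T := 4 * m) (by omega) ⟨2 * m, by ring⟩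
  have hST : S < 4 * m := by
    have hle : S ≤ 4 * m := le_of_not_gt fun h => hS (by simp [choose_eq_zero_of_lt h])
    refine lt_of_le_of_ne hle ?_
    rintro rfl
    rw [mul_left_comm] at hS4
    omega
  obtain ⟨e, he, hr⟩ : ∃ e ≤ 1, (p * S + e) % 4 = 2 := by
    rcases hS4 with h | h
    exacts [⟨1, le_rfl, by omega⟩, ⟨0, zero_le _, by omega⟩]
  have hpS : p * S + p ≤ 4 * (p * m) := by nlinarith
  refine ⟨(p * S + e) / 4, by omega, ?_⟩
  rw [show 4 * k + 5 = p ^ 1 * (4 * m) + 1 by rw [pow_one]; linarith,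
    show 4 * ((p * S + e) / 4) + 2 = p ^ 1 * S + e by rw [pow_one]; omega]
  exact Choose.not_dvd_choose_pow_mul_add (by rw [pow_one]; omega) (by rw [pow_one]; omega) hS
    (hp.not_dvd_choose_of_lt he hp.one_lt)
end

section
/- For every integer m ≥ 1, the multiple zeta value ζ(2,2,...,2) with m repetitions of 2 equals π^(2m)/(2m+1)!. -/
/-!
Euler's product `sinh (π y) / (π y) = ∏_{n ≥ 1} (1 + y² / n²)`, expanded in powers of `x = y²`,
has as coefficient of `x ^ m` the `m`-th elementary symmetric function of the numbers `1 / n²`,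
that is `ζ(2,…,2)`; the Taylor series of `sinh` expands the same function with coefficients
`π ^ (2m) / (2m+1)!`. Both series converge and agree at every `x > 0`, so by the identity
theorem for power series their coefficients coincide.
-/

/-- The multiple zeta value `ζ(n₁,…,n_d) = ∑_{0 < k₁ < ⋯ < k_d} 1/(k₁^{n₁} ⋯ k_d^{n_d})`,
defined as a sum over strictly increasing tuples of positive integers. -/
noncomputable def mzv (ns : List ℕ) : ℝ :=
  ∑' f : {f : Fin ns.length → ℕ // StrictMono f ∧ ∀ i, 0 < f i},
    ∏ i : Fin ns.length, (1 : ℝ) / (f.1 i : ℝ) ^ ns.get i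

open Real Filter Topology FormalMultilinearSeries

theorem one_le_radius_ofScalars {𝕜 : Type*} [NontriviallyNormedField 𝕜] {a : ℕ → 𝕜}
    (ha : Summable fun n => ‖a n‖) : 1 ≤ (ofScalars 𝕜 a).radius := by
  simpa using (ofScalars 𝕜 a).le_radius_of_summable_norm (r := 1) (by simpa [ofScalars_norm])

theorem eq_of_frequently_tsum_mul_pow_eq {𝕜 : Type*} [NontriviallyNormedField 𝕜]
    [CompleteSpace 𝕜] {a b : ℕ → 𝕜} (ha : 0 < (ofScalars 𝕜 a).radius)
    (hb : 0 < (ofScalars 𝕜 b).radius)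
    (h : ∃ᶠ x in 𝓝[≠] 0, ∑' n, a n * x ^ n = ∑' n, b n * x ^ n) : a = b := by
  have hsum (c : ℕ → 𝕜) : (ofScalars 𝕜 c).sum = fun x => ∑' n, c n * x ^ n := by
    ext x
    simp only [FormalMultilinearSeries.sum, ofScalars_apply_eq, smul_eq_mul]
  have hfa := ((ofScalars 𝕜 a).hasFPowerSeriesOnBall ha).hasFPowerSeriesAt
  have hfb := ((ofScalars 𝕜 b).hasFPowerSeriesOnBall hb).hasFPowerSeriesAt
  rw [hsum] at hfa hfb
  have hab := (hfa.analyticAt.frequently_eq_iff_eventually_eq hfb.analyticAt).1 h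
  exact ofScalars_series_injective 𝕜 𝕜
    (hfa.eq_formalMultilinearSeries (hfb.congr (EventuallyEq.symm hab)))

theorem eq_of_hasSum_mul_pow_of_pos {a b : ℕ → ℝ} {F : ℝ → ℝ} (ha : ∀ n, 0 ≤ a n)
    (hb : ∀ n, 0 ≤ b n) (hFa : ∀ x > 0, HasSum (fun n => a n * x ^ n) (F x))
    (hFb : ∀ x > 0, HasSum (fun n => b n * x ^ n) (F x)) : a = b := by
  have hradius {c : ℕ → ℝ} (hc : ∀ n, 0 ≤ c n)
      (hFc : ∀ x > 0, HasSum (fun n => c n * x ^ n) (F x)) : 0 < (ofScalars ℝ c).radius :=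
    zero_lt_one.trans_le <| one_le_radius_ofScalars <| by
      simpa [abs_of_nonneg (hc _)] using (hFc 1 one_pos).summable
  have hpos : ∀ᶠ x in 𝓝[>] 0, ∑' n, a n * x ^ n = ∑' n, b n * x ^ n :=
    eventually_nhdsWithin_of_forall fun x hx => (hFa x hx).tsum_eq.trans (hFb x hx).tsum_eq.symm
  exact eq_of_frequently_tsum_mul_pow_eq (hradius ha hFa) (hradius hb hFb) <|
    hpos.frequently.filter_mono (nhdsWithin_mono 0 fun x hx => ne_of_gt hx)

noncomputable def tsumEsymm {ι : Type*} (u : ι → ℝ) (m : ℕ) : ℝ :=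
  ∑' s : Set.powersetCard ι m, ∏ i ∈ s.1, u i

theorem tsumEsymm_nonneg {ι : Type*} {u : ι → ℝ} (hu : ∀ i, 0 ≤ u i) (m : ℕ) :
    0 ≤ tsumEsymm u m :=
  tsum_nonneg fun _ => Finset.prod_nonneg fun i _ => hu i

theorem hasSum_tsumEsymm_mul_pow {ι : Type*} {u : ι → ℝ} (hu : ∀ i, 0 ≤ u i) (hs : Summable u)
    {x : ℝ} (hx : 0 ≤ x) :
    HasSum (fun m => tsumEsymm u m * x ^ m) (∏' i, (1 + x * u i)) := by
  have hprod : Summable fun s : Finset ι => ∏ i ∈ s, x * u i :=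
    summable_finsetProd_of_summable_nonneg (fun i => mul_nonneg hx (hu i)) (hs.mul_left x)
  rw [tprod_one_add hprod]
  refine (hprod.hasSum.tsum_fiberwise Finset.card).congr_fun fun m => ?_
  unfold tsumEsymm
  rw [← tsum_mul_right]
  refine tsum_congr fun s => ?_
  rw [Finset.prod_mul_distrib, Finset.prod_const, s.2, mul_comm]

def strictMonoPosEquiv (n : ℕ) :
    {f : Fin n → ℕ // StrictMono f ∧ ∀ i, 0 < f i} ≃ (Fin n ↪o ℕ) where
  toFun f := OrderEmbedding.ofStrictMono (fun i => f.1 i - 1) fun i j hij => by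
    have := f.2.1 hij
    have := f.2.2 i
    dsimp only
    omega
  invFun g := ⟨fun i => g i + 1, fun i j hij => by simpa using hij, fun i => Nat.succ_pos _⟩
  left_inv f := Subtype.ext <| funext fun i => by
    have := f.2.2 i
    show f.1 i - 1 + 1 = f.1 i
    omega
  right_inv g := by ext i; simp

theorem mzv_eq_tsumEsymm {ns : List ℕ} {k : ℕ} (h : ∀ n ∈ ns, n = k) :
    mzv ns = tsumEsymm (fun j : ℕ => 1 / ((j : ℝ) + 1) ^ k) ns.length := by
  rw [tsumEsymm, ← ((strictMonoPosEquiv _).trans Set.powersetCard.ofFinEmbEquiv).tsum_eq, mzv]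
  refine tsum_congr fun f => ?_
  simp only [Equiv.trans_apply, Set.powersetCard.ofFinEmbEquiv_apply,
    Set.powersetCard.ofFinEmb, Set.powersetCard.val_map, Finset.prod_map]
  refine Finset.prod_congr rfl fun i _ => ?_
  rw [h _ (List.get_mem ns i)]
  change _ = 1 / (((f.1 i - 1 : ℕ) : ℝ) + 1) ^ k
  rw [Nat.cast_pred (f.2.2 i), sub_add_cancel]

theorem summable_one_div_add_one_sq : Summable fun j : ℕ => 1 / ((j : ℝ) + 1) ^ 2 := by
  exact_mod_cast (summable_nat_add_iff 1).2 (summable_one_div_nat_pow.2 one_lt_two)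

theorem Real.hasProd_euler_sinh {y : ℝ} (hy : y ≠ 0) :
    HasProd (fun j : ℕ => 1 + y ^ 2 * (1 / ((j : ℝ) + 1) ^ 2)) (sinh (π * y) / (π * y)) := by
  rw [(Real.multipliable_one_add_of_summable (summable_one_div_add_one_sq.mul_left (y ^ 2)))
    |>.hasProd_iff_tendsto_nat, ← tendsto_ofReal_iff]
  convert tendsto_euler_sin_prod' (x := y * Complex.I) (by simpa using hy) using 2 with n
  · push_cast
    refine Finset.prod_congr rfl fun j _ => ?_
    rw [sineTerm, mul_pow, Complex.I_sq]
    ring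
  · have : (π * (y * Complex.I) : ℂ) = ((π * y : ℝ) : ℂ) * Complex.I := by push_cast; ring
    rw [this, Complex.sin_mul_I, mul_div_mul_right _ _ Complex.I_ne_zero]
    push_cast
    rfl

theorem Real.hasSum_sinh_div {r : ℝ} (hr : r ≠ 0) :
    HasSum (fun m : ℕ => r ^ (2 * m) / (2 * m + 1).factorial) (sinh r / r) := by
  refine ((Real.hasSum_sinh r).div_const r).congr_fun fun m => ?_
  rw [pow_succ]
  field_simp

theorem hasSum_tsumEsymm_one_div_add_one_sq_mul_pow {x : ℝ} (hx : 0 < x) :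
    HasSum (fun m => tsumEsymm (fun j : ℕ => 1 / ((j : ℝ) + 1) ^ 2) m * x ^ m)
      (sinh (π * √x) / (π * √x)) := by
  rw [← (Real.hasProd_euler_sinh (Real.sqrt_ne_zero'.2 hx)).tprod_eq, sq_sqrt hx.le]
  exact hasSum_tsumEsymm_mul_pow (fun j => by positivity) summable_one_div_add_one_sq hx.le

theorem hasSum_pi_pow_div_factorial_mul_pow {x : ℝ} (hx : 0 < x) :
    HasSum (fun m : ℕ => π ^ (2 * m) / (2 * m + 1).factorial * x ^ m)
      (sinh (π * √x) / (π * √x)) := by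
  refine (Real.hasSum_sinh_div (by positivity)).congr_fun fun m => ?_
  rw [mul_pow, pow_mul √x, sq_sqrt hx.le]
  ring

theorem tsumEsymm_one_div_add_one_sq (m : ℕ) :
    tsumEsymm (fun j : ℕ => 1 / ((j : ℝ) + 1) ^ 2) m = π ^ (2 * m) / (2 * m + 1).factorial :=
  congr_fun (eq_of_hasSum_mul_pow_of_pos (tsumEsymm_nonneg fun j => by positivity)
    (fun m => by positivity) (fun _ => hasSum_tsumEsymm_one_div_add_one_sq_mul_pow)
    (fun _ => hasSum_pi_pow_div_factorial_mul_pow)) m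

theorem hoffman_identity_general (m : ℕ) :
    mzv (List.replicate m 2) = Real.pi ^ (2 * m) / (Nat.factorial (2 * m + 1)) := by
  rw [mzv_eq_tsumEsymm fun _ => List.eq_of_mem_replicate, List.length_replicate,
    tsumEsymm_one_div_add_one_sq]

/-- Hoffman's identity: for `m ≥ 1`, `ζ(2,…,2)` with `m` repetitions of `2`
equals `π^(2m)/(2m+1)!`. -/
theorem hoffman_identity (m : ℕ) (hm : 1 ≤ m) :
    mzv (List.replicate m 2) = Real.pi ^ (2 * m) / (Nat.factorial (2 * m + 1)) :=
  hoffman_identity_general m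
end

section
/- The double zeta value ζ(1,3) = Σ_{0<j<k} 1/(j·k^3) equals ζ(4)/4 = π^4/360. -/
open Set

namespace ZetaOneThree

theorem tsum_add_tsum_swap {α E : Type*} [AddCommMonoid E] [TopologicalSpace E]
    [ContinuousAdd E] [T2Space E] {h : α × α → E} (hh : Summable h) :
    ∑' p, (h p + h p.swap) = 2 • ∑' p, h p := by
  rw [hh.tsum_add hh.prod_symm, two_nsmul, ← (Equiv.prodComm α α).tsum_eq h]
  rfl

theorem range_fst_add_snd_eq_setOf_lt :
    range (fun q : ℕ+ × ℕ+ => (q.1, q.1 + q.2)) = {p | p.1 < p.2} := by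
  ext ⟨j, k⟩
  refine ⟨?_, fun h => ⟨(j, k - j), ?_⟩⟩
  · rintro ⟨q, hq⟩
    simp only [Prod.mk.injEq] at hq
    obtain ⟨rfl, rfl⟩ := hq
    exact PNat.lt_add_right _ _
  · simp [PNat.add_sub_of_lt (show j < k from h)]

theorem tsum_pnat_prod_eq_tsum_diag_add_two_nsmul {E : Type*} [NormedAddCommGroup E]
    [CompleteSpace E] {g : ℕ+ × ℕ+ → E} (hg : Summable g) (hswap : ∀ p, g p.swap = g p) :
    ∑' p, g p = ∑' k, g (k, k) + 2 • ∑' q : ℕ+ × ℕ+, g (q.1, q.1 + q.2) := by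
  set up : ℕ+ × ℕ+ → ℕ+ × ℕ+ := fun q => (q.1, q.1 + q.2)
  have hup : Function.Injective up := fun q q' h => by
    simp only [up, Prod.mk.injEq] at h
    exact Prod.ext h.1 (add_left_cancel (h.1 ▸ h.2))
  have hlow : range (Prod.swap ∘ up) = {p | p.2 < p.1} := by
    rw [range_comp, range_fst_add_snd_eq_setOf_lt, image_swap_eq_preimage_swap]; rfl
  have hcover : univ = (range Function.diag ∪ range up) ∪ range (Prod.swap ∘ up) := by
    rw [hlow, range_diag, range_fst_add_snd_eq_setOf_lt]
    ext p
    rcases lt_trichotomy p.1 p.2 with h | h | h <;> simp [h]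
  have hdisj₁ : Disjoint (range Function.diag) (range up) := by
    rw [range_diag, range_fst_add_snd_eq_setOf_lt]
    exact disjoint_left.2 fun p (h : p.1 = p.2) (h' : p.1 < p.2) => h'.ne h
  have hdisj₂ : Disjoint (range Function.diag ∪ range up) (range (Prod.swap ∘ up)) := by
    rw [hlow, range_diag, range_fst_add_snd_eq_setOf_lt]
    exact disjoint_left.2 fun p h (h' : p.2 < p.1) =>
      h.elim (fun h => h'.ne h.symm) fun h => h'.asymm h
  rw [← tsum_univ, hcover, (hg.subtype _).tsum_union_disjoint hdisj₂ (hg.subtype _),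
    (hg.subtype _).tsum_union_disjoint hdisj₁ (hg.subtype _),
    tsum_range g Function.diag_injective, tsum_range g hup,
    tsum_range g (Prod.swap_injective.comp hup), add_assoc, two_nsmul]
  simp only [Function.comp_apply, hswap]
  rfl

def pnatPairEquiv : ℕ+ × ℕ+ ≃ {f : Fin 2 → ℕ // StrictMono f ∧ ∀ i, 0 < f i} where
  toFun q := ⟨![q.1, q.1 + q.2], Fin.strictMono_iff_lt_succ.2 fun i => by
      fin_cases i; simp, fun i => by fin_cases i <;> simp⟩
  invFun f := (⟨f.1 0, f.2.2 0⟩, ⟨f.1 1 - f.1 0, Nat.sub_pos_of_lt (f.2.1 Fin.zero_lt_one)⟩)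
  left_inv q := Prod.ext (PNat.eq rfl) (PNat.eq (by simp))
  right_inv f := by
    ext i
    fin_cases i
    · rfl
    · simp [Nat.add_sub_cancel' (f.2.1 Fin.zero_lt_one).le]

noncomputable def doubleZetaTerm (a b : ℕ) (q : ℕ+ × ℕ+) : ℝ :=
  1 / ((q.1 : ℝ) ^ a * ((q.1 : ℝ) + q.2) ^ b)

theorem mzv_pair (a b : ℕ) : mzv [a, b] = ∑' q, doubleZetaTerm a b q := by
  calc mzv [a, b]
      = ∑' f : {f : Fin 2 → ℕ // StrictMono f ∧ ∀ i, 0 < f i},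
          ∏ i : Fin 2, (1 : ℝ) / (f.1 i : ℝ) ^ [a, b].get i := rfl
    _ = ∑' q, doubleZetaTerm a b q := by
      rw [← pnatPairEquiv.tsum_eq]
      refine tsum_congr fun q => ?_
      simp [pnatPairEquiv, doubleZetaTerm]

theorem one_div_sq_mul_sq_eq {K : Type*} [Field K] {x y : K} (hx : x ≠ 0) (hy : y ≠ 0)
    (hxy : x + y ≠ 0) :
    1 / (x ^ 2 * y ^ 2) = (1 / (x ^ 2 * (x + y) ^ 2) + 1 / (y ^ 2 * (y + x) ^ 2)) +
      2 * (1 / (x * (x + y) ^ 3) + 1 / (y * (y + x) ^ 3)) := by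
  rw [add_comm y x]
  field_simp
  ring

noncomputable def invSqProd (q : ℕ+ × ℕ+) : ℝ := 1 / ((q.1 : ℝ) ^ 2 * (q.2 : ℝ) ^ 2)

theorem summable_invSqProd : Summable invSqProd := by
  have h : Summable fun k : ℕ+ => 1 / (k : ℝ) ^ 2 :=
    (Real.summable_one_div_nat_pow.2 one_lt_two).comp_injective PNat.coe_injective
  refine (h.mul_of_nonneg h (fun _ => by positivity) fun _ => by positivity).congr fun q => ?_
  simp [invSqProd, mul_comm]

theorem invSqProd_eq (q : ℕ+ × ℕ+) :
    invSqProd q = (doubleZetaTerm 2 2 q + doubleZetaTerm 2 2 q.swap) +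
      2 * (doubleZetaTerm 1 3 q + doubleZetaTerm 1 3 q.swap) := by
  have hpos : ∀ k : ℕ+, (k : ℝ) ≠ 0 := fun k => by positivity
  simpa [invSqProd, doubleZetaTerm] using
    one_div_sq_mul_sq_eq (hpos q.1) (hpos q.2) (by positivity : (q.1 : ℝ) + q.2 ≠ 0)

theorem doubleZetaTerm_nonneg (a b : ℕ) (q : ℕ+ × ℕ+) : 0 ≤ doubleZetaTerm a b q := by
  unfold doubleZetaTerm; positivity

theorem summable_doubleZetaTerm_two_two : Summable (doubleZetaTerm 2 2) :=
  summable_invSqProd.of_nonneg_of_le (doubleZetaTerm_nonneg 2 2) fun q => by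
    linarith [invSqProd_eq q, doubleZetaTerm_nonneg 2 2 q.swap, doubleZetaTerm_nonneg 1 3 q,
      doubleZetaTerm_nonneg 1 3 q.swap]

theorem summable_doubleZetaTerm_one_three : Summable (doubleZetaTerm 1 3) :=
  summable_invSqProd.of_nonneg_of_le (doubleZetaTerm_nonneg 1 3) fun q => by
    linarith [invSqProd_eq q, doubleZetaTerm_nonneg 2 2 q, doubleZetaTerm_nonneg 2 2 q.swap,
      doubleZetaTerm_nonneg 1 3 q, doubleZetaTerm_nonneg 1 3 q.swap]

theorem tsum_invSqProd_eq_diag_add :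
    ∑' q, invSqProd q = ∑' k : ℕ+, 1 / (k : ℝ) ^ 4 + 2 * ∑' q, doubleZetaTerm 2 2 q := by
  rw [tsum_pnat_prod_eq_tsum_diag_add_two_nsmul summable_invSqProd
    fun q => by simp [invSqProd, mul_comm], nsmul_eq_mul]
  congr 1
  · exact tsum_congr fun k => by simp [invSqProd, ← pow_add]
  · simp [invSqProd, doubleZetaTerm]

theorem tsum_invSqProd_eq_partial_fractions :
    ∑' q, invSqProd q = 2 * ∑' q, doubleZetaTerm 2 2 q + 4 * ∑' q, doubleZetaTerm 1 3 q := by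
  have h22 := summable_doubleZetaTerm_two_two
  have h13 := summable_doubleZetaTerm_one_three
  rw [tsum_congr invSqProd_eq, (h22.add h22.prod_symm).tsum_add
    ((h13.add h13.prod_symm).mul_left 2), tsum_mul_left,
    tsum_add_tsum_swap h22, tsum_add_tsum_swap h13, nsmul_eq_mul, nsmul_eq_mul]
  ring

theorem tsum_doubleZetaTerm_one_three :
    ∑' q, doubleZetaTerm 1 3 q = (∑' k : ℕ+, 1 / (k : ℝ) ^ 4) / 4 := by
  linarith [tsum_invSqProd_eq_diag_add, tsum_invSqProd_eq_partial_fractions]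

theorem tsum_pnat_one_div_pow_four : ∑' k : ℕ+, 1 / (k : ℝ) ^ 4 = Real.pi ^ 4 / 90 := by
  rw [tsum_pnat_eq_tsum_of_eq_zero (f := fun n : ℕ => 1 / (n : ℝ) ^ 4) (by simp)]
  exact hasSum_zeta_four.tsum_eq

end ZetaOneThree

/-- The double zeta value `ζ(1,3) = ∑_{0<j<k} 1/(j·k³)` equals `ζ(4)/4 = π⁴/360`. -/
theorem zeta_one_three :
    mzv [1, 3] = (∑' k : ℕ+, (1 : ℝ) / (k : ℝ) ^ 4) / 4 ∧
      mzv [1, 3] = Real.pi ^ 4 / 360 := by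
  have h := (ZetaOneThree.mzv_pair 1 3).trans ZetaOneThree.tsum_doubleZetaTerm_one_three
  refine ⟨h, ?_⟩
  rw [h, ZetaOneThree.tsum_pnat_one_div_pow_four]
  ring
end

section
/- For every integer n ≥ 1, the rational number 1/n! lies in the normalized MZV module 𝒵̂^{n-1} = (𝒵^{n-1} + iπ𝒵^{n-2})/(2πi)^{n-1}, assuming Hoffman's identity ζ(2,...,2) = π^{2m}/(2m+1)! (m repetitions), the identity ζ(1,3,...,1,3) = 2π^{4k}/(4k+2)! (k repetitions of (1,3)), the fact 1/2 ∈ 𝒵̂^1, and the closure properties 𝒵̂^m·𝒵̂^n ⊆ 𝒵̂^{m+n} and 𝒵̂^n ⊆ 𝒵̂^{n+1}. -/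
/-- A list of exponents is admissible if all entries are `≥ 1` and the last is `≥ 2`. -/
def IsAdmissible (ns : List ℕ) : Prop :=
  (∀ i ∈ ns, 1 ≤ i) ∧ ∀ h : ns ≠ [], 2 ≤ ns.getLast h

/-- `𝒵ⁿ ⊆ ℝ`: the `ℤ`-span of all multiple zeta values of weight `n`. -/
noncomputable def ZW (n : ℕ) : Submodule ℤ ℝ :=
  Submodule.span ℤ {x : ℝ | ∃ ns : List ℕ, ns.sum = n ∧ IsAdmissible ns ∧ x = mzv ns}

/-- Normalized MZV modules: `𝒵̂⁰ = ℤ` and, for `n ≥ 1`,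
`𝒵̂ⁿ = (𝒵ⁿ + iπ·𝒵ⁿ⁻¹)/(2πi)ⁿ ⊆ ℂ`. -/
noncomputable def Zhat (Z : ℕ → Submodule ℤ ℝ) : ℕ → Set ℂ
  | 0 => Set.range (fun k : ℤ => (k : ℂ))
  | n + 1 => {z : ℂ | ∃ a ∈ Z (n + 1), ∃ b ∈ Z n,
      z = ((a : ℂ) + Complex.I * (Real.pi : ℂ) * (b : ℂ)) /
        (2 * (Real.pi : ℂ) * Complex.I) ^ (n + 1)}

open Complex Finset

lemma one_mem_Zhat0 : (1 : ℂ) ∈ Zhat ZW 0 := ⟨1, by norm_num⟩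

lemma zero_mem_Zhat (n : ℕ) : (0 : ℂ) ∈ Zhat ZW n := by
  cases n with
  | zero => exact ⟨0, by norm_num⟩
  | succ n => exact ⟨0, zero_mem _, 0, zero_mem _, by simp⟩

lemma add_mem_Zhat {n : ℕ} {x y : ℂ} (hx : x ∈ Zhat ZW n) (hy : y ∈ Zhat ZW n) :
    x + y ∈ Zhat ZW n := by
  cases n with
  | zero =>
      obtain ⟨k, rfl⟩ := hx; obtain ⟨l, rfl⟩ := hy
      exact ⟨k + l, by push_cast; ring⟩
  | succ n =>
      obtain ⟨a, ha, b, hb, rfl⟩ := hx; obtain ⟨a', ha', b', hb', rfl⟩ := hy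
      exact ⟨a + a', add_mem ha ha', b + b', add_mem hb hb', by
        rw [← add_div]; push_cast; ring⟩

lemma zsmul_mem_Zhat {n : ℕ} (c : ℤ) {x : ℂ} (hx : x ∈ Zhat ZW n) :
    (c : ℂ) * x ∈ Zhat ZW n := by
  cases n with
  | zero =>
      obtain ⟨k, rfl⟩ := hx
      exact ⟨c * k, by push_cast; ring⟩
  | succ n =>
      obtain ⟨a, ha, b, hb, rfl⟩ := hx
      exact ⟨c • a, Submodule.smul_mem _ _ ha, c • b, Submodule.smul_mem _ _ hb, by
        push_cast [zsmul_eq_mul]; ring⟩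

lemma sum_mem_Zhat {n : ℕ} {ι : Type*} (s : Finset ι) (f : ι → ℂ)
    (h : ∀ i ∈ s, f i ∈ Zhat ZW n) : (∑ i ∈ s, f i) ∈ Zhat ZW n := by
  classical
  induction s using Finset.induction_on with
  | empty => simpa using zero_mem_Zhat n
  | insert _ _ hi ih =>
      rw [Finset.sum_insert hi]
      exact add_mem_Zhat (h _ (Finset.mem_insert_self _ _))
        (ih fun i hi' => h _ (Finset.mem_insert_of_mem hi'))

/-- `1/(2m+1)! ∈ 𝒵̂^{2m}`. -/
lemma inv_fact_odd_mem
    (hHoffman : ∀ m : ℕ, 1 ≤ m →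
      mzv (List.replicate m 2) = Real.pi ^ (2 * m) / (Nat.factorial (2 * m + 1)))
    (m : ℕ) : (1 / ((2 * m + 1).factorial : ℂ)) ∈ Zhat ZW (2 * m) := by
  cases m with
  | zero => simpa using one_mem_Zhat0
  | succ m =>
      have hadm : IsAdmissible (List.replicate (m + 1) 2) := by
        constructor
        · intro i hi
          rw [List.eq_of_mem_replicate hi]; norm_num
        · intro h
          have := List.getLast_mem h
          rw [List.eq_of_mem_replicate this]
      have hmem : mzv (List.replicate (m + 1) 2) ∈ ZW (2 * (m + 1)) :=
        Submodule.subset_span ⟨List.replicate (m + 1) 2, by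
          simp [List.sum_replicate]; ring, hadm, rfl⟩
      have hidx : 2 * (m + 1) = (2 * m + 1) + 1 := by ring
      rw [show (2 * (m+1) : ℕ) = (2*m+1)+1 from by ring]
      refine ⟨((-4 : ℤ) ^ (m + 1)) • mzv (List.replicate (m + 1) 2),
        ?_, 0, zero_mem _, ?_⟩
      · rw [← hidx] at *
        exact Submodule.smul_mem _ _ hmem
      · rw [hHoffman (m + 1) (by omega)]
        have hπ : (Real.pi : ℂ) ≠ 0 := by exact_mod_cast Real.pi_ne_zero
        have hF : ((2 * (m + 1) + 1).factorial : ℂ) ≠ 0 :=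
          Nat.cast_ne_zero.2 (Nat.factorial_ne_zero _)
        have hpow : (2 * (Real.pi : ℂ) * I) ^ ((2 * m + 1) + 1)
            = (-4 : ℂ) ^ (m + 1) * (Real.pi : ℂ) ^ (2 * (m + 1)) := by
          rw [show (2 * m + 1) + 1 = 2 * (m + 1) from by ring, pow_mul,
            show (2 * (Real.pi : ℂ) * I) ^ 2 = -4 * (Real.pi : ℂ) ^ 2 from by
              rw [mul_pow, mul_pow, Complex.I_sq]; ring,
            mul_pow, ← pow_mul]
        rw [hpow]

        rw [show (2 * m + 1 + 1 : ℕ) = 2 * (m + 1) from by ring]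

        have h4 : ((-4 : ℂ)) ^ (m + 1) ≠ 0 := pow_ne_zero _ (by norm_num)
        have hπp : (Real.pi : ℂ) ^ (2 * (m + 1)) ≠ 0 := pow_ne_zero _ hπ
        simp only [zsmul_eq_mul]
        push_cast

        field_simp
        ring

lemma half_pow_mem (hhalf : (1 / 2 : ℂ) ∈ Zhat ZW 1)
    (hmul : ∀ m n : ℕ, ∀ x ∈ Zhat ZW m, ∀ y ∈ Zhat ZW n, x * y ∈ Zhat ZW (m + n)) :
    ∀ e : ℕ, ((1 / 2 : ℂ)) ^ (e + 1) ∈ Zhat ZW (e + 1) := by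
  intro e
  induction e with
  | zero => simpa using hhalf
  | succ e ih =>
      have := hmul (e + 1) 1 _ ih _ hhalf
      rw [pow_succ]
      exact this

lemma exists_gcd_eq_sum (s : Finset ℕ) (f : ℕ → ℕ) :
    ∃ c : ℕ → ℤ, ((s.gcd f : ℕ) : ℤ) = ∑ r ∈ s, c r * f r := by
  classical
  induction s using Finset.induction_on with
  | empty => exact ⟨0, by simp⟩
  | @insert a s ha ih =>
      obtain ⟨c, hc⟩ := ih
      refine ⟨fun r => if r = a then Nat.gcdA (f a) (s.gcd f)
        else Nat.gcdB (f a) (s.gcd f) * c r, ?_⟩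
      rw [Finset.sum_insert ha, Finset.gcd_insert]
      simp only [if_pos rfl]
      have : ∀ r ∈ s, (if r = a then Nat.gcdA (f a) (s.gcd f)
          else Nat.gcdB (f a) (s.gcd f) * c r) * f r
          = Nat.gcdB (f a) (s.gcd f) * (c r * f r) := by
        intro r hr
        rw [if_neg (by rintro rfl; exact ha hr)]
        ring
      rw [Finset.sum_congr rfl this, ← Finset.mul_sum, ← hc]
      have hb := Nat.gcd_eq_gcd_ab (f a) (s.gcd f)
      have hg : (GCDMonoid.gcd (f a) (s.gcd f) : ℕ) = Nat.gcd (f a) (s.gcd f) := rfl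
      rw [hg, hb]
      simp only [if_true]
      ring

lemma sum_odd_choose (N : ℕ) (hN : 1 ≤ N) :
    ∑ r ∈ (Finset.range (N + 1)).filter (fun r => Odd r), N.choose r = 2 ^ (N - 1) := by
  have h1 : ∑ r ∈ Finset.range (N + 1), ((-1 : ℤ)) ^ r * N.choose r = 0 :=
    Int.alternating_sum_range_choose_of_ne (by omega)
  have h2 : ∑ r ∈ Finset.range (N + 1), (N.choose r : ℤ) = 2 ^ N := by
    exact_mod_cast congrArg (Nat.cast : ℕ → ℤ) (Nat.sum_range_choose N)
  have h3 : ∑ r ∈ Finset.range (N + 1), ((1 - (-1 : ℤ) ^ r) * N.choose r) = 2 ^ N := by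
    have : ∀ r ∈ Finset.range (N + 1), ((1 - (-1 : ℤ) ^ r) * N.choose r)
        = (N.choose r : ℤ) - (-1 : ℤ) ^ r * N.choose r := fun r _ => by ring
    rw [Finset.sum_congr rfl this, Finset.sum_sub_distrib, h1, h2, sub_zero]
  have h4 : ∑ r ∈ (Finset.range (N + 1)).filter (fun r => Odd r), (2 : ℤ) * N.choose r
      = 2 ^ N := by
    rw [Finset.sum_filter, ← h3]
    refine Finset.sum_congr rfl fun r _ => ?_
    rcases Nat.even_or_odd r with he | ho
    · rw [if_neg (by simpa [Nat.not_odd_iff_even] using he), he.neg_one_pow]; ring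
    · rw [if_pos ho, ho.neg_one_pow]; ring
  have h5 : (2 : ℤ) * (∑ r ∈ (Finset.range (N + 1)).filter (fun r => Odd r),
      (N.choose r : ℤ)) = 2 * 2 ^ (N - 1) := by
    rw [Finset.mul_sum, h4, ← pow_succ']
    congr 1
    omega
  have h6 := mul_left_cancel₀ (by norm_num : (2:ℤ) ≠ 0) h5
  exact_mod_cast h6

lemma two_pow_not_dvd_factorial {N : ℕ} (hN : 1 ≤ N) : ¬ (2 ^ N ∣ N.factorial) :=
  not_pow_dvd_of_emultiplicity_lt (Nat.emultiplicity_two_factorial_lt (by omega))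

lemma even_case
    (hHoffman : ∀ m : ℕ, 1 ≤ m →
      mzv (List.replicate m 2) = Real.pi ^ (2 * m) / (Nat.factorial (2 * m + 1)))
    (hhalf : (1 / 2 : ℂ) ∈ Zhat ZW 1)
    (hmul : ∀ m n : ℕ, ∀ x ∈ Zhat ZW m, ∀ y ∈ Zhat ZW n, x * y ∈ Zhat ZW (m + n))
    (hmono : ∀ n : ℕ, Zhat ZW n ⊆ Zhat ZW (n + 1))
    (N : ℕ) (hN : 2 ≤ N) (hNe : Even N) :
    (1 / (N.factorial : ℂ)) ∈ Zhat ZW (N - 1) := by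
  classical
  obtain ⟨K, hK⟩ := hNe
  set F : Finset ℕ := (Finset.range (N + 1)).filter (fun r => Odd r) with hF
  set g : ℕ := F.gcd N.choose with hgdef
  -- g divides 2^(N-1)
  have hg2 : g ∣ 2 ^ (N - 1) := by
    rw [← sum_odd_choose N (by omega)]
    exact Finset.dvd_sum fun r hr => Finset.gcd_dvd hr
  set d : ℕ := Nat.gcd (2 ^ (N - 1) * g) N.factorial with hddef
  have hd2 : d ∣ 2 ^ (N - 1) := by
    have h1 : d ∣ 2 ^ (N - 1) * 2 ^ (N - 1) :=
      (Nat.gcd_dvd_left _ _).trans (mul_dvd_mul_left _ hg2)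
    rw [← pow_add] at h1
    obtain ⟨α, hα, hda⟩ := (Nat.dvd_prime_pow Nat.prime_two).1 h1
    rw [hda]
    apply pow_dvd_pow
    by_contra hcon
    have hdvd : 2 ^ α ∣ N.factorial := hda ▸ Nat.gcd_dvd_right _ _
    exact two_pow_not_dvd_factorial (by omega : 1 ≤ N)
      ((pow_dvd_pow 2 (by omega : N ≤ α)).trans hdvd)
  obtain ⟨c, hc⟩ := exists_gcd_eq_sum F N.choose
  obtain ⟨e, he⟩ := hd2
  -- the integer Bézout identity
  have hkey : ∃ (c' : ℕ → ℤ) (c0 : ℤ), ((2 : ℤ)) ^ (N - 1)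
      = (∑ r ∈ F, c' r * (N.choose r : ℤ) * 2 ^ (N - 1)) + c0 * (N.factorial : ℤ) := by
    refine ⟨fun r => (e : ℤ) * Nat.gcdA (2 ^ (N - 1) * g) N.factorial * c r,
      (e : ℤ) * Nat.gcdB (2 ^ (N - 1) * g) N.factorial, ?_⟩
    have hb := Nat.gcd_eq_gcd_ab (2 ^ (N - 1) * g) N.factorial
    have h2 : ((2 : ℤ)) ^ (N - 1) = (d : ℤ) * e := by exact_mod_cast congrArg (Nat.cast : ℕ → ℤ) he
    have hsum : ∑ r ∈ F, ((e : ℤ) * Nat.gcdA (2 ^ (N - 1) * g) N.factorial * c r)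
          * (N.choose r : ℤ) * 2 ^ (N - 1)
        = ((e : ℤ) * Nat.gcdA (2 ^ (N - 1) * g) N.factorial * 2 ^ (N - 1))
          * ∑ r ∈ F, c r * (N.choose r : ℤ) := by
      rw [Finset.mul_sum]
      exact Finset.sum_congr rfl fun r _ => by ring
    rw [← hgdef] at hc
    rw [← hddef] at hb
    push_cast at hb
    rw [hsum]
    linear_combination h2 + (e : ℤ) * hb
      + ((e : ℤ) * Nat.gcdA (2 ^ (N - 1) * g) N.factorial * 2 ^ (N - 1)) * hc
  obtain ⟨c', c0, hkey⟩ := hkey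
  -- generators
  have hGr : ∀ r ∈ F, (1 / ((r.factorial : ℂ) * ((N - r).factorial : ℂ))) ∈ Zhat ZW (N - 1) := by
    intro r hr
    rw [hF, Finset.mem_filter, Finset.mem_range] at hr
    obtain ⟨hrlt, a, ha⟩ := hr
    obtain ⟨b, hb⟩ : ∃ b, N - r = 2 * b + 1 := ⟨K - a - 1, by omega⟩
    have h1 := inv_fact_odd_mem hHoffman a
    have h2 := inv_fact_odd_mem hHoffman b
    have h3 := hmul _ _ _ h1 _ h2
    have h4 := hmono _ h3
    have hidx : 2 * a + 2 * b + 1 = N - 1 := by omega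
    rw [hidx] at h4
    have hval : (1 / ((r.factorial : ℂ) * ((N - r).factorial : ℂ)))
        = (1 / ((2 * a + 1).factorial : ℂ)) * (1 / ((2 * b + 1).factorial : ℂ)) := by
      rw [hb, ha, div_mul_div_comm, one_mul]
    rw [hval]
    exact h4
  have hH : ((1 / 2 : ℂ)) ^ (N - 1) ∈ Zhat ZW (N - 1) := by
    have := half_pow_mem hhalf hmul (N - 2)
    rw [show N - 2 + 1 = N - 1 from by omega] at this
    exact this
  -- the value identity in ℂ
  have hNfac : ((N.factorial : ℂ)) ≠ 0 := Nat.cast_ne_zero.2 (Nat.factorial_ne_zero _)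
  have hcast : ((2 : ℂ)) ^ (N - 1)
      = (∑ r ∈ F, (c' r : ℂ) * (N.choose r : ℂ) * 2 ^ (N - 1)) + (c0 : ℂ) * (N.factorial : ℂ) := by
    have := congrArg (Int.cast : ℤ → ℂ) hkey
    push_cast at this
    exact this
  have hval : (1 / (N.factorial : ℂ))
      = ∑ r ∈ F, (c' r : ℂ) * (1 / ((r.factorial : ℂ) * ((N - r).factorial : ℂ)))
        + (c0 : ℂ) * (1 / 2 : ℂ) ^ (N - 1) := by
    have hterm : ∀ r ∈ F, (c' r : ℂ) * (1 / ((r.factorial : ℂ) * ((N - r).factorial : ℂ)))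
        = ((c' r : ℂ) * (N.choose r : ℂ)) / (N.factorial : ℂ) := by
      intro r hr
      rw [hF, Finset.mem_filter, Finset.mem_range] at hr
      have hrN : r ≤ N := by omega
      have hch := congrArg (Nat.cast : ℕ → ℂ) (Nat.choose_mul_factorial_mul_factorial hrN)
      push_cast at hch
      have hne : ((r.factorial : ℂ) * ((N - r).factorial : ℂ)) ≠ 0 :=
        mul_ne_zero (Nat.cast_ne_zero.2 (Nat.factorial_ne_zero _))
          (Nat.cast_ne_zero.2 (Nat.factorial_ne_zero _))
      have hX : (1 : ℂ) / ((r.factorial : ℂ) * ((N - r).factorial : ℂ))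
          = (N.choose r : ℂ) / (N.factorial : ℂ) := by
        rw [div_eq_div_iff hne hNfac]
        linear_combination -hch
      rw [hX, mul_div_assoc]
    rw [Finset.sum_congr rfl hterm, ← Finset.sum_div]
    have h2ne : ((2 : ℂ)) ^ (N - 1) ≠ 0 := pow_ne_zero _ (by norm_num)
    rw [div_pow, one_pow]
    field_simp
    have hsum2 : ∑ r ∈ F, (c' r : ℂ) * (N.choose r : ℂ) * 2 ^ (N - 1)
        = (∑ r ∈ F, (c' r : ℂ) * (N.choose r : ℂ)) * 2 ^ (N - 1) := by
      rw [Finset.sum_mul]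
    rw [hsum2] at hcast
    linear_combination hcast
  rw [hval]
  exact add_mem_Zhat
    (sum_mem_Zhat _ _ fun r hr => zsmul_mem_Zhat (c' r) (hGr r hr))
    (zsmul_mem_Zhat c0 hH)

/-- For every `n ≥ 1` one has `1/n! ∈ 𝒵̂ⁿ⁻¹`, assuming Hoffman's identity
`ζ(2,…,2) = π^{2m}/(2m+1)!`, the identity `ζ(1,3,…,1,3) = 2π^{4k}/(4k+2)!`,
the fact `1/2 ∈ 𝒵̂¹`, and the closure properties `𝒵̂ᵐ·𝒵̂ⁿ ⊆ 𝒵̂^{m+n}` and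
`𝒵̂ⁿ ⊆ 𝒵̂ⁿ⁺¹`. -/
theorem inv_factorial_mem_Zhat
    (hHoffman : ∀ m : ℕ, 1 ≤ m →
      mzv (List.replicate m 2) = Real.pi ^ (2 * m) / (Nat.factorial (2 * m + 1)))
    (h13 : ∀ k : ℕ, 1 ≤ k →
      mzv (List.flatten (List.replicate k [1, 3])) =
        2 * Real.pi ^ (4 * k) / (Nat.factorial (4 * k + 2)))
    (hhalf : (1 / 2 : ℂ) ∈ Zhat ZW 1)
    (hmul : ∀ m n : ℕ, ∀ x ∈ Zhat ZW m, ∀ y ∈ Zhat ZW n, x * y ∈ Zhat ZW (m + n))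
    (hmono : ∀ n : ℕ, Zhat ZW n ⊆ Zhat ZW (n + 1)) :
    ∀ n : ℕ, 1 ≤ n → (1 / (Nat.factorial n) : ℂ) ∈ Zhat ZW (n - 1) := by
  intro n hn
  rcases Nat.even_or_odd n with he | ho
  · have h2 : 2 ≤ n := by
      obtain ⟨k, hk⟩ := he
      omega
    exact even_case hHoffman hhalf hmul hmono n h2 he
  · obtain ⟨m, rfl⟩ := ho
    rw [show 2 * m + 1 - 1 = 2 * m from by omega]
    exact inv_fact_odd_mem hHoffman m
end
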